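/- Let ε* = ln( (−5 + 2·(6353 − 405√241)^{1/3} + 2·(6353 + 405√241)^{1/3}) / 27 ), and define α*(ε) = 1 − e^{−ε/2} if ε > ε* and α*(ε) = 0 if 0 < ε ≤ ε*. Then: (a) for every ε > ε*, max_{t ∈ [−1,1]} σ²_H(t, ε, α*(ε)) < min{ max_{t ∈ [−1,1]} σ²_P(t,ε), max_{t ∈ [−1,1]} σ²_D(t,ε) }; and (b) for every 0 < ε ≤ ε*, max_{t ∈ [−1,1]} σ²_H(t, ε, α*(ε)) = max_{t ∈ [−1,1]} σ²_D(t,ε) < max_{t ∈ [−1,1]} σ²_P(t,ε). -/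
import Mathlib


open Real

/-- noise variance of the Piecewise Mechanism on input `t` with privacy budget `ε`. -/
noncomputable def pmVar (t ε : ℝ) : ℝ :=
  t ^ 2 / (exp (ε / 2) - 1) + (exp (ε / 2) + 3) / (3 * (exp (ε / 2) - 1) ^ 2)

/-- noise variance of Duchi et al.'s one-dimensional mechanism on input `t`. -/
noncomputable def duchiVar (t ε : ℝ) : ℝ := ((exp ε + 1) / (exp ε - 1)) ^ 2 - t ^ 2

/-- noise variance of the Hybrid Mechanism (PM with probability `α`, Duchi with `1−α`). -/
noncomputable def hmVar (t ε α : ℝ) : ℝ := α * pmVar t ε + (1 - α) * duchiVar t ε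

/-- `ε* = ln((−5 + 2·(6353 − 405√241)^{1/3} + 2·(6353 + 405√241)^{1/3}) / 27)`. -/
noncomputable def epsStar : ℝ :=
  Real.log ((-5 + 2 * (6353 - 405 * Real.sqrt 241) ^ ((1 : ℝ) / 3) +
      2 * (6353 + 405 * Real.sqrt 241) ^ ((1 : ℝ) / 3)) / 27)

/-- the optimal mixing probability `α*(ε)`. -/
noncomputable def alphaStar (ε : ℝ) : ℝ := if ε > epsStar then 1 - exp (-(ε / 2)) else 0

/-- worst-case (over `t ∈ [−1,1]`) noise variance of the Hybrid Mechanism at `α*(ε)`. -/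
noncomputable def hmMaxVar (ε : ℝ) : ℝ :=
  sSup ((fun t => hmVar t ε (alphaStar ε)) '' Set.Icc (-1 : ℝ) 1)

/-- worst-case noise variance of the Piecewise Mechanism. -/
noncomputable def pmMaxVar (ε : ℝ) : ℝ := sSup ((fun t => pmVar t ε) '' Set.Icc (-1 : ℝ) 1)

/-- worst-case noise variance of Duchi et al.'s one-dimensional mechanism. -/
noncomputable def duchiMaxVar (ε : ℝ) : ℝ :=
  sSup ((fun t => duchiVar t ε) '' Set.Icc (-1 : ℝ) 1)

noncomputable def vD : ℝ :=
  (-5 + 2 * (6353 - 405 * Real.sqrt 241) ^ ((1 : ℝ) / 3) +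
      2 * (6353 + 405 * Real.sqrt 241) ^ ((1 : ℝ) / 3)) / 27

lemma epsStar_eq : epsStar = Real.log vD := rfl

lemma sqrt241_lt : Real.sqrt 241 < 15.6 := by
  have := Real.sq_sqrt (by norm_num : (241:ℝ) ≥ 0)
  nlinarith [Real.sqrt_nonneg (241:ℝ)]

lemma cube_rt (c : ℝ) (hc : 0 ≤ c) : (c ^ ((1:ℝ)/3)) ^ (3:ℕ) = c := by
  rw [← Real.rpow_natCast (c ^ ((1:ℝ)/3)) 3, ← Real.rpow_mul hc]
  norm_num

lemma vD_props : 9*vD^3 + 5*vD^2 - 13*vD - 49 = 0 ∧ 1 < vD ∧ vD < 19/10 := by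
  set d := Real.sqrt 241 with hd
  have hd2 : d^2 = 241 := Real.sq_sqrt (by norm_num)
  have hdlt : d < 15.6 := sqrt241_lt
  have hdnn : 0 ≤ d := Real.sqrt_nonneg _
  have h1 : (0:ℝ) < 6353 - 405 * d := by nlinarith
  have h2 : (0:ℝ) < 6353 + 405 * d := by nlinarith
  set a := (6353 - 405 * d) ^ ((1:ℝ)/3) with ha
  set b := (6353 + 405 * d) ^ ((1:ℝ)/3) with hb
  have ha3 : a ^ (3:ℕ) = 6353 - 405 * d := cube_rt _ h1.le
  have hb3 : b ^ (3:ℕ) = 6353 + 405 * d := cube_rt _ h2.le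
  have hapos : 0 < a := Real.rpow_pos_of_pos h1 _
  have hbpos : 0 < b := Real.rpow_pos_of_pos h2 _
  have hab : a * b = 94 := by
    rw [ha, hb, ← Real.mul_rpow h1.le h2.le]
    have : (6353 - 405 * d) * (6353 + 405 * d) = 830584 := by nlinarith
    rw [this, show (830584:ℝ) = 94 ^ (3:ℕ) by norm_num,
      ← Real.rpow_natCast (94:ℝ) 3, ← Real.rpow_mul (by norm_num)]
    norm_num
  set s := a + b with hs
  have hspos : 0 < s := by positivity
  have hs3 : s ^ 3 = 282 * s + 12706 := by
    have : s ^ 3 = a^(3:ℕ) + b^(3:ℕ) + 3 * (a*b) * s := by ring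
    rw [this, ha3, hb3, hab]; ring
  have hsgt : 16 < s := by nlinarith [sq_nonneg s, sq_nonneg (s-16)]
  have hslt : s < 563/20 := by nlinarith [sq_nonneg (s - 25), sq_nonneg s]
  have hvs : vD = (2 * s - 5) / 27 := by rw [vD]; ring
  refine ⟨?_, ?_, ?_⟩
  · rw [hvs]; linear_combination (72/19683) * hs3
  · rw [hvs]; linarith
  · rw [hvs]; linarith

lemma epsStar_pos : 0 < epsStar := by
  rw [epsStar_eq]
  exact Real.log_pos vD_props.2.1

lemma pmMax_eq (ε : ℝ) (hε : 0 < ε) : pmMaxVar ε = pmVar 1 ε := by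
  have hx : 1 < exp (ε/2) := by
    rw [show (1:ℝ) = exp 0 by simp]; exact exp_lt_exp.mpr (by linarith)
  apply IsGreatest.csSup_eq
  constructor
  · exact ⟨1, by norm_num, rfl⟩
  · rintro y ⟨t, ht, rfl⟩
    simp only [Set.mem_Icc] at ht
    have ht2 : t^2 ≤ 1^2 := by nlinarith [ht.1, ht.2]
    unfold pmVar
    have h : t^2 / (exp (ε/2) - 1) ≤ 1^2 / (exp (ε/2) - 1) := by gcongr
    linarith

lemma duchiMax_eq (ε : ℝ) : duchiMaxVar ε = duchiVar 0 ε := by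
  apply IsGreatest.csSup_eq
  constructor
  · exact ⟨0, by norm_num, rfl⟩
  · rintro y ⟨t, ht, rfl⟩
    unfold duchiVar
    nlinarith [sq_nonneg t]

lemma hmVar_const (ε t : ℝ) (hε : 0 < ε) :
    hmVar t ε (1 - exp (-(ε/2))) = hmVar 0 ε (1 - exp (-(ε/2))) := by
  have hx : 1 < exp (ε/2) := by
    rw [show (1:ℝ) = exp 0 by simp]; exact exp_lt_exp.mpr (by linarith)
  have hxne : exp (ε/2) - 1 ≠ 0 := by linarith
  have hxpos : (0:ℝ) < exp (ε/2) := exp_pos _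
  have heε : exp ε - 1 ≠ 0 := by
    have : 1 < exp ε := by
      rw [show (1:ℝ) = exp 0 by simp]; exact exp_lt_exp.mpr (by linarith)
    linarith
  unfold hmVar pmVar duchiVar
  rw [Real.exp_neg]
  field_simp
  ring

lemma keyA' (x : ℝ) (hx : 1 < x) : 4*x^2/((x^2-1)^2) < 4*x/(3*(x-1)^2) := by
  have hx0 : (0:ℝ) < x := by linarith
  have hne1 : x - 1 ≠ 0 := by linarith
  have hne2 : x^2 - 1 ≠ 0 := by nlinarith
  have hx1sq : (0:ℝ) < (x-1)^2 := by positivity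
  rw [div_lt_div_iff₀ (by positivity) (by positivity)]
  have hq : (0:ℝ) < x^2 - x + 1 := by nlinarith
  nlinarith [mul_pos (mul_pos hx0 hx1sq) hq]

lemma keyB' (x v : ℝ) (hx : 1 < x) (hv1 : 1 < v)
    (hvc : 9*v^3 + 5*v^2 - 13*v - 49 = 0) (hvlt : v < x^2) :
    (x+3)/(3*(x-1)^2) < (x^2+1)^2/((x^2-1)^2) := by
  have hx0 : (0:ℝ) < x := by linarith
  have hne1 : x - 1 ≠ 0 := by linarith
  have hne2 : x^2 - 1 ≠ 0 := by nlinarith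
  have hx1sq : (0:ℝ) < (x-1)^2 := by positivity
  have hfac : (0:ℝ) < 9*(x^2*x^2 + x^2*v + v*v) + 5*(x^2+v) - 13 := by nlinarith
  have hu3 : 0 < 9*(x^2)^3 + 5*(x^2)^2 - 13*x^2 - 49 := by
    nlinarith [mul_pos (sub_pos.mpr hvlt) hfac]
  have hAB : x^2 + 7 < 3*x^3 + x := by
    by_contra h
    push_neg at h
    have h2 : (3*x^3+x)^2 ≤ (x^2+7)^2 := by
      apply pow_le_pow_left₀ (by positivity) h
    nlinarith [hu3, h2]
  rw [div_lt_div_iff₀ (by positivity) (by positivity)]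
  have hc : (0:ℝ) < 3*x^3 - x^2 + x - 7 := by linarith
  nlinarith [mul_pos (mul_pos hx1sq hx0) hc]

lemma keyC' (x : ℝ) (hx : 1 < x) (hx2 : x^2 < 19/10) :
    (x^2+1)^2/((x^2-1)^2) < 4*x/(3*(x-1)^2) := by
  have hx0 : (0:ℝ) < x := by linarith
  have hne1 : x - 1 ≠ 0 := by linarith
  have hne2 : x^2 - 1 ≠ 0 := by nlinarith
  rw [div_lt_div_iff₀ (by positivity) (by positivity)]
  nlinarith [mul_pos (sub_pos.mpr hx) (sub_pos.mpr hx2),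
    mul_pos hx0 (sub_pos.mpr hx2), sq_nonneg (x-1),
    mul_pos (mul_pos hx0 hx0) (sub_pos.mpr hx2)]

/-- (a) For `ε > ε*`, HM's worst-case variance is strictly below both PM's and Duchi's;
(b) for `0 < ε ≤ ε*`, it equals Duchi's, which is strictly below PM's. -/
theorem stmt_13 :
    (∀ ε : ℝ, epsStar < ε → hmMaxVar ε < min (pmMaxVar ε) (duchiMaxVar ε)) ∧
    (∀ ε : ℝ, 0 < ε → ε ≤ epsStar →
      hmMaxVar ε = duchiMaxVar ε ∧ duchiMaxVar ε < pmMaxVar ε) := by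
  obtain ⟨hvc, hv1, hv2⟩ := vD_props
  have hvpos : (0:ℝ) < vD := by linarith
  constructor
  · -- part (a)
    intro ε hε
    have hε0 : 0 < ε := lt_trans epsStar_pos hε
    obtain ⟨x, hxdef⟩ : ∃ y, exp (ε/2) = y := ⟨_, rfl⟩
    have hx : 1 < x := by
      rw [← hxdef, show (1:ℝ) = exp 0 by simp]; exact exp_lt_exp.mpr (by linarith)
    have hx0 : 0 < x := by linarith
    have hu : x^2 = exp ε := by
      rw [← hxdef, sq, ← Real.exp_add]; norm_num
    have huv : vD < x^2 := by
      rw [hu]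
      calc vD = exp (Real.log vD) := (Real.exp_log hvpos).symm
        _ < exp ε := exp_lt_exp.mpr (by rw [← epsStar_eq]; exact hε)
    obtain ⟨α, hαdef⟩ : ∃ a, alphaStar ε = a := ⟨_, rfl⟩
    have hαeq : α = 1 - exp (-(ε/2)) := by rw [← hαdef, alphaStar, if_pos hε]
    have hαpos : 0 < α := by
      rw [hαeq]
      have : exp (-(ε/2)) < 1 := by
        rw [show (1:ℝ) = exp 0 by simp]; exact exp_lt_exp.mpr (by linarith)
      linarith
    have hαlt : α < 1 := by
      rw [hαeq]; have := exp_pos (-(ε/2)); linarith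
    have hconst : ∀ t : ℝ, hmVar t ε α = hmVar 0 ε α := by
      intro t; rw [hαeq]; exact hmVar_const ε t hε0
    have hmax : hmMaxVar ε = hmVar 0 ε α := by
      unfold hmMaxVar; rw [hαdef]
      apply IsGreatest.csSup_eq
      refine ⟨⟨0, by norm_num, rfl⟩, ?_⟩
      rintro y ⟨t, ht, rfl⟩
      exact le_of_eq (hconst t)
    have hne1 : x - 1 ≠ 0 := by linarith
    have hne2 : x^2 - 1 ≠ 0 := by nlinarith
    have e1 : duchiVar 1 ε = 4*x^2/((x^2-1)^2) := by
      unfold duchiVar; rw [← hu]; field_simp; try ring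
    have e2 : pmVar 1 ε = 4*x/(3*(x-1)^2) := by
      unfold pmVar; rw [hxdef]; field_simp; try ring
    have e3 : pmVar 0 ε = (x+3)/(3*(x-1)^2) := by
      unfold pmVar; rw [hxdef]; field_simp; try ring
    have e4 : duchiVar 0 ε = (x^2+1)^2/((x^2-1)^2) := by
      unfold duchiVar; rw [← hu]; field_simp; try ring
    have keyA : duchiVar 1 ε < pmVar 1 ε := by
      rw [e1, e2]; exact keyA' x hx
    have keyB : pmVar 0 ε < duchiVar 0 ε := by
      rw [e3, e4]; exact keyB' x vD hx hv1 hvc huv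
    rw [lt_min_iff, hmax, pmMax_eq ε hε0, duchiMax_eq ε]
    have hhm1 : hmVar 1 ε α = α * pmVar 1 ε + (1-α) * duchiVar 1 ε := rfl
    have hhm0 : hmVar 0 ε α = α * pmVar 0 ε + (1-α) * duchiVar 0 ε := rfl
    constructor
    · rw [← hconst 1, hhm1]; nlinarith [keyA, hαpos, hαlt]
    · rw [hhm0]; nlinarith [keyB, hαpos, hαlt]
  · -- part (b)
    intro ε hε0 hεle
    obtain ⟨x, hxdef⟩ : ∃ y, exp (ε/2) = y := ⟨_, rfl⟩
    have hx : 1 < x := by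
      rw [← hxdef, show (1:ℝ) = exp 0 by simp]; exact exp_lt_exp.mpr (by linarith)
    have hx0 : 0 < x := by linarith
    have hu : x^2 = exp ε := by rw [← hxdef, sq, ← Real.exp_add]; norm_num
    have hx2 : x^2 ≤ vD := by
      rw [hu]
      calc exp ε ≤ exp epsStar := exp_le_exp.mpr hεle
        _ = vD := by rw [epsStar_eq]; exact Real.exp_log hvpos
    have hα0 : alphaStar ε = 0 := by rw [alphaStar, if_neg (not_lt.mpr hεle)]
    constructor
    · have hfun : (fun t => hmVar t ε (alphaStar ε)) = fun t => duchiVar t ε := by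
        funext t; rw [hα0]; unfold hmVar; ring
      unfold hmMaxVar duchiMaxVar
      rw [hfun]
    · rw [duchiMax_eq ε, pmMax_eq ε hε0]
      have hne1 : x - 1 ≠ 0 := by linarith
      have hne2 : x^2 - 1 ≠ 0 := by nlinarith
      have e2 : pmVar 1 ε = 4*x/(3*(x-1)^2) := by
        unfold pmVar; rw [hxdef]; field_simp; try ring
      have e4 : duchiVar 0 ε = (x^2+1)^2/((x^2-1)^2) := by
        unfold duchiVar; rw [← hu]; field_simp; try ring
      rw [e2, e4]
      exact keyC' x hx (lt_of_le_of_lt hx2 hv2)
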